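/- Let J subjects have locations x_1,…,x_J ∈ D and responses X_1,…,X_J ∈ {0,1}, and let B ⊂ D with 0 < n_B < J. Then e^{S^(2)(B)} = e^{S^(1)(B)} + e^{S^(1)(D∖B)} − 1, where S^(1)(D∖B) is computed with n_{D∖B} = J − n_B and m_{D∖B} = I − m_B. -/

import Mathlib

open Real Finset Classical

/-- `φ(p) = p log(p/p̂₀) + (1−p) log((1−p)/(1−p̂₀))`. -/
noncomputable def phi (q p : ℝ) : ℝ :=
  p * Real.log (p / q) + (1 - p) * Real.log ((1 - p) / (1 - q))

/-- The one-sided log GLR score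
`S⁽¹⁾(B) = [n_B φ(m_B/n_B) + (J−n_B) φ((I−m_B)/(J−n_B))]·1{m_B/n_B > p̂₀}`. -/
noncomputable def S1 {α : Type*} (J : ℕ) (x : Fin J → α) (X : Fin J → Bool) (B : Set α) : ℝ :=
  let nB : ℝ := (Finset.univ.filter fun i => x i ∈ B).card
  let mB : ℝ := (Finset.univ.filter fun i => x i ∈ B ∧ X i = true).card
  let I : ℝ := (Finset.univ.filter fun i => X i = true).card
  let p0 : ℝ := I / (J : ℝ)
  if p0 < mB / nB then
    nB * phi p0 (mB / nB) + ((J : ℝ) - nB) * phi p0 ((I - mB) / ((J : ℝ) - nB))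
  else 0

/-- The two-sided log GLR score
`S⁽²⁾(B) = n_B φ(m_B/n_B) + (J−n_B) φ((I−m_B)/(J−n_B))`. -/
noncomputable def S2 {α : Type*} (J : ℕ) (x : Fin J → α) (X : Fin J → Bool) (B : Set α) : ℝ :=
  let nB : ℝ := (Finset.univ.filter fun i => x i ∈ B).card
  let mB : ℝ := (Finset.univ.filter fun i => x i ∈ B ∧ X i = true).card
  let I : ℝ := (Finset.univ.filter fun i => X i = true).card
  let p0 : ℝ := I / (J : ℝ)
  nB * phi p0 (mB / nB) + ((J : ℝ) - nB) * phi p0 ((I - mB) / ((J : ℝ) - nB))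

/-!
The pooled proportion `p̂₀ = I / J` is the average of `m_B / n_B` and `m_{D∖B} / n_{D∖B}` with
positive weights `n_B / J` and `(J - n_B) / J`, so at most one of the two indicators in
`S⁽¹⁾(B)`, `S⁽¹⁾(D∖B)` fires, and if neither does, both proportions equal `p̂₀` and
`S⁽²⁾(B) = 0` because `φ(p̂₀) = 0`. Since `S⁽²⁾` is symmetric in `B` and `D∖B`, each case
reduces to `e^s = e^s + e^0 - 1`.
-/

lemma phi_self (q : ℝ) : phi q q = 0 := by
  rcases eq_or_ne q 0 with rfl | hq
  · simp [phi]
  rcases eq_or_ne q 1 with rfl | hq₁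
  · simp [phi]
  rw [phi, div_self hq, div_self (sub_ne_zero.mpr hq₁.symm), log_one]
  ring

section TwoSample

variable {n m I N : ℝ}

lemma not_lt_div_and_lt_div (hn : 0 < n) (hnN : n < N) :
    ¬ (I / N < m / n ∧ I / N < (I - m) / (N - n)) := by
  rintro ⟨h₁, h₂⟩
  rw [div_lt_div_iff₀ (hn.trans hnN) hn] at h₁
  rw [div_lt_div_iff₀ (hn.trans hnN) (sub_pos.mpr hnN)] at h₂
  nlinarith

lemma div_eq_of_not_lt_div_of_not_lt_div (hn : 0 < n) (hnN : n < N)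
    (h₁ : ¬ I / N < m / n) (h₂ : ¬ I / N < (I - m) / (N - n)) :
    m / n = I / N ∧ (I - m) / (N - n) = I / N := by
  have hN : 0 < N := hn.trans hnN
  have hNn : 0 < N - n := sub_pos.mpr hnN
  rw [not_lt, div_le_div_iff₀ hn hN] at h₁
  rw [not_lt, div_le_div_iff₀ hNn hN] at h₂
  constructor
  · rw [div_eq_div_iff hn.ne' hN.ne']; nlinarith
  · rw [div_eq_div_iff hNn.ne' hN.ne']; nlinarith

lemma two_sample_score_eq_zero (hn : 0 < n) (hnN : n < N)
    (h₁ : ¬ I / N < m / n) (h₂ : ¬ I / N < (I - m) / (N - n)) :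
    n * phi (I / N) (m / n) + (N - n) * phi (I / N) ((I - m) / (N - n)) = 0 := by
  obtain ⟨e₁, e₂⟩ := div_eq_of_not_lt_div_of_not_lt_div hn hnN h₁ h₂
  simp [e₁, e₂, phi_self]

end TwoSample

lemma exp_eq_exp_ite_add_exp_ite_sub_one {P Q : Prop} [Decidable P] [Decidable Q] {s : ℝ}
    (hPQ : ¬ (P ∧ Q)) (hs : ¬ P → ¬ Q → s = 0) :
    exp s = exp (if P then s else 0) + exp (if Q then s else 0) - 1 := by
  by_cases hP : P
  · have hQ : ¬Q := fun hQ => hPQ ⟨hP, hQ⟩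
    simp [hP, hQ]
  by_cases hQ : Q
  · simp [hP, hQ]
  simp [hP, hQ, hs hP hQ]

section Counting

variable {ι α : Type*} [Fintype ι] {x : ι → α} {D B : Set α}

/- The decidability instances on `D \ B` are left as implicit arguments so that these lemmas also
rewrite the classical instances that appear in `S1 J x X (D \ B)`. -/
lemma cast_card_filter_mem_diff (hxD : ∀ i, x i ∈ D) {_ : DecidablePred fun i => x i ∈ D \ B} :
    ((@filter ι (fun i => x i ∈ D \ B) _ univ).card : ℝ) =
      Fintype.card ι - (univ.filter fun i => x i ∈ B).card := by
  have hsplit := card_filter_add_card_filter_not (s := univ) (fun i => x i ∈ B)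
  have hdiff : @filter ι (fun i => x i ∈ D \ B) _ univ = univ.filter fun i => x i ∉ B :=
    filter_congr fun i _ => by simp [hxD i]
  rw [hdiff, eq_sub_iff_add_eq, ← Nat.cast_add, add_comm, hsplit, card_univ]

lemma cast_card_filter_mem_diff_and (hxD : ∀ i, x i ∈ D) (p : ι → Prop) [DecidablePred p]
    {_ : DecidablePred fun i => x i ∈ D \ B ∧ p i} :
    ((@filter ι (fun i => x i ∈ D \ B ∧ p i) _ univ).card : ℝ) =
      (univ.filter p).card - (univ.filter fun i => x i ∈ B ∧ p i).card := by
  have hsplit := card_filter_add_card_filter_not (s := univ.filter p) (fun i => x i ∈ B)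
  simp only [filter_filter] at hsplit
  have hdiff : @filter ι (fun i => x i ∈ D \ B ∧ p i) _ univ =
      univ.filter fun i => p i ∧ x i ∉ B :=
    filter_congr fun i _ => by simp [hxD i, and_comm]
  have hB : (univ.filter fun i => x i ∈ B ∧ p i) = univ.filter fun i => p i ∧ x i ∈ B :=
    filter_congr fun i _ => and_comm
  rw [hdiff, hB, eq_sub_iff_add_eq, ← Nat.cast_add, add_comm, hsplit]

end Counting

theorem exp_two_sided_glr_identity_general {α : Type*}
    (J : ℕ) (D B : Set α)
    (x : Fin J → α) (hxD : ∀ i, x i ∈ D) (X : Fin J → Bool)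
    (hnBpos : 0 < (Finset.univ.filter fun i => x i ∈ B).card)
    (hnBJ : (Finset.univ.filter fun i => x i ∈ B).card < J) :
    Real.exp (S2 J x X B) = Real.exp (S1 J x X B) + Real.exp (S1 J x X (D \ B)) - 1 := by
  have hn : (0 : ℝ) < (univ.filter fun i => x i ∈ B).card := by exact_mod_cast hnBpos
  have hnJ : ((univ.filter fun i => x i ∈ B).card : ℝ) < J := by exact_mod_cast hnBJ
  simp only [S1, S2, cast_card_filter_mem_diff hxD, Fintype.card_fin,
    cast_card_filter_mem_diff_and hxD fun i => X i = true, sub_sub_cancel]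
  rw [add_comm (((J : ℝ) - _) * _)]
  exact exp_eq_exp_ite_add_exp_ite_sub_one (not_lt_div_and_lt_div hn hnJ)
    (two_sample_score_eq_zero hn hnJ)

/-- Identity (6.7): `e^{S⁽²⁾(B)} = e^{S⁽¹⁾(B)} + e^{S⁽¹⁾(D∖B)} − 1`. -/
theorem exp_two_sided_glr_identity {α : Type*}
    (J : ℕ) (D B : Set α) (hBD : B ⊆ D)
    (x : Fin J → α) (hxD : ∀ i, x i ∈ D) (X : Fin J → Bool)
    (hnBpos : 0 < (Finset.univ.filter fun i => x i ∈ B).card)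
    (hnBJ : (Finset.univ.filter fun i => x i ∈ B).card < J) :
    Real.exp (S2 J x X B) = Real.exp (S1 J x X B) + Real.exp (S1 J x X (D \ B)) - 1 :=
  exp_two_sided_glr_identity_general J D B x hxD X hnBpos hnBJ
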